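/- arXiv:2603.06015 — 2 statements merged into one kernel-verified Lean document; each statement's English description precedes it below -/
import Mathlib

section
/- Let V be a restricted 𝔗_{min(d_0,…,d_{p−1})}-module with annihilating level (h, q), v ∈ V, and fix l, k ∈ ℤ, 1 ≤ i, j ≤ p−1 and s ∈ ℕ with s ≤ 2h. Then, on the 𝔗-module M(V, a, d), the function m ↦ Ω^{(i,j,s)}_{l,m} · v(k) is polynomial in m of degree at most 2h−s with coefficients in V ⊗ x^{pl+k+i+j}; that is, there exist u_0, …, u_{2h−s} ∈ V ⊗ x^{pl+k+i+j}, independent of m, with Ω^{(i,j,s)}_{l,m} · v(k) = Σ_{t=0}^{2h−s} m^t u_t for all m ∈ ℤ, and the top coefficient is u_{2h−s} = ((−1)^h p^{2h} (2h)! / ((h!)² (2h−s)!)) · (I_h² v)(pl+k+i+j). -/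
open Finsupp TensorProduct

attribute [local instance 100] LieRing.ofAssociativeRing

/-! ### Abstract presentation of the twisted Heisenberg-Virasoro algebra -/

/-- The twisted Heisenberg-Virasoro algebra: a complex Lie algebra with basis
`{L n, I n, CL, CLI, CI : n ∈ ℤ}` and the prescribed brackets. -/
structure TwistedHV where
  T : Type
  [lieRing : LieRing T]
  [lieAlg : LieAlgebra ℂ T]
  L : ℤ → T
  I : ℤ → T
  CL : T
  CLI : T
  CI : T
  basis : Module.Basis (ℤ ⊕ ℤ ⊕ Fin 3) ℂ T
  basis_eq : ∀ x, basis x = Sum.elim L (Sum.elim I ![CL, CLI, CI]) x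
  bracket_LL : ∀ m n : ℤ,
    ⁅L m, L n⁆ = ((n : ℂ) - (m : ℂ)) • L (m + n) +
      (if m + n = 0 then (((m : ℂ) ^ 3 - (m : ℂ)) / 12) • CL else 0)
  bracket_LI : ∀ m n : ℤ,
    ⁅L m, I n⁆ = (n : ℂ) • I (m + n) +
      (if m + n = 0 then ((m : ℂ) ^ 2 + (m : ℂ)) • CLI else 0)
  bracket_II : ∀ m n : ℤ,
    ⁅I m, I n⁆ = if m + n = 0 then (m : ℂ) • CI else 0
  central_CL : ∀ x : T, ⁅CL, x⁆ = 0
  central_CLI : ∀ x : T, ⁅CLI, x⁆ = 0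
  central_CI : ∀ x : T, ⁅CI, x⁆ = 0

attribute [instance] TwistedHV.lieRing TwistedHV.lieAlg

/-- The gap-`p` Virasoro algebra: `Lg n` represents `L_{p n}`, `Ig m` represents `I_m`
for `m` not divisible by `p`, and `Cg j` represents the central element `C_j` for
`0 ≤ j ≤ ⌊p/2⌋`. -/
structure GapVirasoro (p : ℕ) where
  g : Type
  [lieRing : LieRing g]
  [lieAlg : LieAlgebra ℂ g]
  Lg : ℤ → g
  Ig : ℤ → g
  Cg : ℕ → g
  basis : Module.Basis (ℤ ⊕ {m : ℤ // ¬ ((p : ℤ) ∣ m)} ⊕ {j : ℕ // j ≤ p / 2}) ℂ g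
  basis_eq : ∀ x, basis x = Sum.elim Lg (Sum.elim (fun m => Ig m.1) (fun j => Cg j.1)) x
  bracket_LL : ∀ m n : ℤ,
    ⁅Lg m, Lg n⁆ = ((p : ℂ) * ((n : ℂ) - (m : ℂ))) • Lg (m + n) +
      (if m + n = 0 then (((m : ℂ) ^ 3 - (m : ℂ)) / 12) • Cg 0 else 0)
  bracket_LI : ∀ m b : ℤ, ¬ ((p : ℤ) ∣ b) →
    ⁅Lg m, Ig b⁆ = (b : ℂ) • Ig ((p : ℤ) * m + b)
  bracket_II : ∀ a b : ℤ, ¬ ((p : ℤ) ∣ a) → ¬ ((p : ℤ) ∣ b) →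
    ⁅Ig a, Ig b⁆ =
      if a + b = 0 then (a : ℂ) • Cg (min ((a % (p : ℤ)).toNat) (p - (a % (p : ℤ)).toNat)) else 0
  central_C : ∀ j : ℕ, j ≤ p / 2 → ∀ x : g, ⁅Cg j, x⁆ = 0

attribute [instance] GapVirasoro.lieRing GapVirasoro.lieAlg

/-- The mirror Heisenberg-Virasoro algebra: `h n` represents `h_{n + 1/2}`. -/
structure MirrorHV where
  M : Type
  [lieRing : LieRing M]
  [lieAlg : LieAlgebra ℂ M]
  d : ℤ → M
  h : ℤ → M
  c : M
  l : M
  basis : Module.Basis (ℤ ⊕ ℤ ⊕ Fin 2) ℂ M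
  basis_eq : ∀ x, basis x = Sum.elim d (Sum.elim h ![c, l]) x
  bracket_dd : ∀ m n : ℤ,
    ⁅d m, d n⁆ = ((m : ℂ) - (n : ℂ)) • d (m + n) +
      (if m + n = 0 then (((m : ℂ) ^ 3 - (m : ℂ)) / 12) • c else 0)
  bracket_dh : ∀ m n : ℤ, ⁅d m, h n⁆ = (-((n : ℂ) + 1 / 2)) • h (m + n)
  bracket_hh : ∀ m n : ℤ,
    ⁅h m, h n⁆ = if m + n + 1 = 0 then ((m : ℂ) + 1 / 2) • l else 0
  central_c : ∀ x : M, ⁅c, x⁆ = 0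
  central_l : ∀ x : M, ⁅l, x⁆ = 0

attribute [instance] MirrorHV.lieRing MirrorHV.lieAlg

/-! ### Representations of the subalgebras `𝔗ₙ` -/

/-- A module over the subalgebra `𝔗ₙ = span{L k, I (n+k) : k ∈ ℕ}` of the twisted
Heisenberg-Virasoro algebra, encoded through the action operators (`IV m` is only
meaningful, and only constrained, for `m ≥ n`). -/
structure THVRep (n : ℕ) where
  V : Type
  [addCommGroup : AddCommGroup V]
  [module : Module ℂ V]
  LV : ℕ → Module.End ℂ V
  IV : ℕ → Module.End ℂ V
  comm_LL : ∀ k l : ℕ, ⁅LV k, LV l⁆ = ((l : ℂ) - (k : ℂ)) • LV (k + l)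
  comm_LI : ∀ k l : ℕ, n ≤ l → ⁅LV k, IV l⁆ = (l : ℂ) • IV (k + l)
  comm_II : ∀ k l : ℕ, n ≤ k → n ≤ l → ⁅IV k, IV l⁆ = 0

attribute [instance] THVRep.addCommGroup THVRep.module

namespace THVRep

variable {n : ℕ}

/-- A `𝔗ₙ`-module is restricted if every vector is annihilated by `L m` and `I m`
for all sufficiently large `m`. -/
def Restricted (R : THVRep n) : Prop :=
  ∀ v : R.V, ∃ N : ℕ, ∀ m : ℕ, N ≤ m → R.LV m v = 0 ∧ R.IV m v = 0

/-- `V` has annihilating level `(h, q)` (with `h ≥ n`). -/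
def AnnLevel (R : THVRep n) (h q : ℕ) : Prop :=
  n ≤ h ∧ (∃ v : R.V, R.IV h v ≠ 0) ∧ (∃ v : R.V, R.LV q v ≠ 0) ∧
    (∀ k : ℕ, h < k → ∀ v : R.V, R.IV k v = 0) ∧
    (∀ k : ℕ, q < k → ∀ v : R.V, R.LV k v = 0)

/-- Irreducibility of a `𝔗ₙ`-module. -/
def IsSimple (R : THVRep n) : Prop :=
  (∃ v : R.V, v ≠ 0) ∧
  ∀ W : Submodule ℂ R.V,
    (∀ k : ℕ, ∀ v ∈ W, R.LV k v ∈ W) →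
    (∀ m : ℕ, n ≤ m → ∀ v ∈ W, R.IV m v ∈ W) →
    W = ⊥ ∨ W = ⊤

end THVRep

/-- Isomorphism of `𝔗_r`-modules (both sides regarded as `𝔗_r`-modules by restriction). -/
def RepIso {n₁ n₂ : ℕ} (R : THVRep n₁) (S : THVRep n₂) (r : ℕ) : Prop :=
  ∃ ψ : R.V ≃ₗ[ℂ] S.V,
    (∀ k : ℕ, ∀ v : R.V, ψ (R.LV k v) = S.LV k (ψ v)) ∧
    (∀ m : ℕ, r ≤ m → ∀ v : R.V, ψ (R.IV m v) = S.IV m (ψ v))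

/-- `min {d i : i ∈ P}` (junk value `0` if `P = ∅`). -/
def finsetMin (P : Finset ℕ) (d : ℕ → ℕ) : ℕ :=
  if h : P.Nonempty then P.inf' h d else 0

/-- `min (d 0, …, d (p-1))`. -/
def dmin (p : ℕ) (d : ℕ → ℕ) : ℕ := finsetMin (Finset.range p) d

/-- The set `P - P = {(i - j) mod p : i, j ∈ P}`. -/
def PdiffP (p : ℕ) (P : Finset ℕ) : Finset ℕ :=
  Finset.image₂ (fun i j : ℕ => (((i : ℤ) - (j : ℤ)) % (p : ℤ)).toNat) P P

/-- The index set `𝒫 = {k ∈ ℤ : k mod p ∈ P}`. -/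
def PIdx (p : ℕ) (P : Finset ℕ) : Type :=
  {k : ℤ // ((k % (p : ℤ)).toNat) ∈ P}

lemma mem_shift {P : Finset ℕ} {q r k : ℤ} (h : (((r + k) % q).toNat) ∈ P) (m : ℤ) :
    (((q * m + r + k) % q).toNat) ∈ P := by
  have e : q * m + r + k = r + k + m * q := by ring
  rw [e, Int.add_mul_emod_self_right]
  exact h

lemma mem_shift0 {P : Finset ℕ} {q k : ℤ} (h : ((k % q).toNat) ∈ P) (m : ℤ) :
    (((q * m + k) % q).toNat) ∈ P := by
  have e : q * m + k = k + m * q := by ring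
  rw [e, Int.add_mul_emod_self_right]
  exact h

/-- Shift of an index `k ∈ 𝒫` by `p * m`. -/
def shiftIdx0 {p : ℕ} {P : Finset ℕ} (k : PIdx p P) (m : ℤ) : PIdx p P :=
  ⟨(p : ℤ) * m + k.1, mem_shift0 k.2 m⟩

/-! ### Representations, irreducibility and isomorphism -/

/-- Irreducibility of a representation `ρ` of a complex Lie algebra. -/
def IsIrreducibleRep {g : Type} [LieRing g] [LieAlgebra ℂ g]
    {M : Type} [AddCommGroup M] [Module ℂ M]
    (ρ : g →ₗ⁅ℂ⁆ Module.End ℂ M) : Prop :=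
  (∃ w : M, w ≠ 0) ∧
  ∀ W : Submodule ℂ M, (∀ x : g, ∀ w ∈ W, ρ x w ∈ W) → W = ⊥ ∨ W = ⊤

/-- Isomorphism of two representations of the same complex Lie algebra. -/
def RepModIso {g : Type} [LieRing g] [LieAlgebra ℂ g]
    {M₁ M₂ : Type} [AddCommGroup M₁] [Module ℂ M₁] [AddCommGroup M₂] [Module ℂ M₂]
    (ρ₁ : g →ₗ⁅ℂ⁆ Module.End ℂ M₁) (ρ₂ : g →ₗ⁅ℂ⁆ Module.End ℂ M₂) : Prop :=
  ∃ φ : M₁ ≃ₗ[ℂ] M₂, ∀ (x : g) (w : M₁), φ (ρ₁ x w) = ρ₂ x (φ w)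

/-- The action formulas defining the `𝔗`-module `M(V, a, d)` on `V ⊗ ℂ[x^{±1}] = ℤ →₀ V`. -/
def IsTHVAction (T : TwistedHV) (p : ℕ) (d : ℕ → ℕ) (a : ℂ) {n : ℕ} (R : THVRep n)
    (ρ : T.T →ₗ⁅ℂ⁆ Module.End ℂ (ℤ →₀ R.V)) : Prop :=
  (∀ (m k : ℤ) (v : R.V),
    ρ (T.L m) (Finsupp.single k v) =
      (a + (k : ℂ)) • Finsupp.single (m + k) v +
      ∑ᶠ j : ℕ, (((m : ℂ) ^ (j + 1)) / ((j + 1).factorial : ℂ)) •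
        Finsupp.single (m + k) (R.LV j v)) ∧
  (∀ (b k : ℤ) (v : R.V),
    ρ (T.I b) (Finsupp.single k v) =
      ∑ᶠ j : ℕ, (((b : ℂ) ^ (j + d ((b % (p : ℤ)).toNat))) /
          ((j + d ((b % (p : ℤ)).toNat)).factorial : ℂ)) •
        Finsupp.single (b + k) (R.IV (j + d ((b % (p : ℤ)).toNat)) v)) ∧
  ρ T.CL = 0 ∧ ρ T.CLI = 0 ∧ ρ T.CI = 0

/-- The action formulas defining the `𝔤`-module `M(V, a, d, P)` on `V ⊗ ℂ[P]`. -/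
def IsGapAction {p : ℕ} (G : GapVirasoro p) (P : Finset ℕ) (d : ℕ → ℕ) (a : ℂ)
    {n : ℕ} (R : THVRep n)
    (ρ : G.g →ₗ⁅ℂ⁆ Module.End ℂ (PIdx p P →₀ R.V)) : Prop :=
  (∀ (m : ℤ) (k : PIdx p P) (v : R.V),
    ρ (G.Lg m) (Finsupp.single k v) =
      (a + (k.1 : ℂ)) • Finsupp.single (shiftIdx0 k m) v +
      ∑ᶠ j : ℕ, (((((p : ℤ) * m : ℤ) : ℂ) ^ (j + 1)) / ((j + 1).factorial : ℂ)) •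
        Finsupp.single (shiftIdx0 k m) (R.LV j v)) ∧
  (∀ (m : ℤ) (i : ℕ), 1 ≤ i → i ≤ p - 1 → ∀ (k : PIdx p P) (v : R.V),
    ρ (G.Ig ((p : ℤ) * m + (i : ℤ))) (Finsupp.single k v) =
      if h : ((((i : ℤ) + k.1) % (p : ℤ)).toNat) ∈ P then
        ∑ᶠ j : ℕ, (((((p : ℤ) * m + (i : ℤ) : ℤ) : ℂ) ^ (j + d i)) / ((j + d i).factorial : ℂ)) •
          Finsupp.single (⟨(p : ℤ) * m + (i : ℤ) + k.1, mem_shift h m⟩ : PIdx p P)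
            (R.IV (j + d i) v)
      else 0) ∧
  (∀ j : ℕ, j ≤ p / 2 → ρ (G.Cg j) = 0)

/-- The operator `Ω^{(i,j,s)}_{l,m}` as an element of the universal enveloping algebra. -/
noncomputable def OmegaU (T : TwistedHV) (p : ℕ) (i j : ℕ) (l m : ℤ) (s : ℕ) :
    UniversalEnvelopingAlgebra ℂ T.T :=
  ∑ k ∈ Finset.range (s + 1),
    ((-1 : ℂ) ^ (s - k) * (s.choose k : ℂ)) •
      ((UniversalEnvelopingAlgebra.ι ℂ (T.I ((p : ℤ) * l - (p : ℤ) * m - (p : ℤ) * k + (i : ℤ)))) *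
       (UniversalEnvelopingAlgebra.ι ℂ (T.I ((p : ℤ) * m + (p : ℤ) * k + (j : ℤ)))))

/-- The action of the operator `Ω^{(i,j,s)}_{l,m}` in a representation `ρ`, where `Iop`
is the family of elements `I_n`. -/
noncomputable def OmegaOp {g : Type} [LieRing g] [LieAlgebra ℂ g]
    {M : Type} [AddCommGroup M] [Module ℂ M]
    (ρ : g →ₗ⁅ℂ⁆ Module.End ℂ M) (Iop : ℤ → g) (p : ℕ) (i j : ℕ) (l m : ℤ) (s : ℕ) :
    Module.End ℂ M :=
  ∑ k ∈ Finset.range (s + 1),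
    ((-1 : ℂ) ^ (s - k) * (s.choose k : ℂ)) •
      (ρ (Iop ((p : ℤ) * l - (p : ℤ) * m - (p : ℤ) * k + (i : ℤ))) *
       ρ (Iop ((p : ℤ) * m + (p : ℤ) * k + (j : ℤ))))

/-- The module of intermediate series `A(α, β, γ, Q)` over the gap-2 Virasoro algebra. -/
def IsARep (G : GapVirasoro 2) (α β γ : ℂ) (Q : Finset ℕ)
    (ρ : G.g →ₗ⁅ℂ⁆ Module.End ℂ (PIdx 2 Q →₀ ℂ)) : Prop :=
  (∀ (m : ℤ) (k : PIdx 2 Q),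
    ρ (G.Lg m) (Finsupp.single k (1 : ℂ)) =
      (α + 2 * β * (m : ℂ) + (k.1 : ℂ)) • Finsupp.single (shiftIdx0 k m) (1 : ℂ)) ∧
  (∀ (m : ℤ) (k : PIdx 2 Q),
    ρ (G.Ig (((2 : ℕ) : ℤ) * m + 1) ) (Finsupp.single k (1 : ℂ)) =
      if h : (((1 + k.1) % ((2 : ℕ) : ℤ)).toNat) ∈ Q then
        (if k.1 % 2 = 0 then (1 : ℂ) else γ) •
          Finsupp.single (⟨((2 : ℕ) : ℤ) * m + 1 + k.1, mem_shift h m⟩ : PIdx 2 Q) (1 : ℂ)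
      else 0) ∧
  ρ (G.Cg 0) = 0 ∧ ρ (G.Cg 1) = 0

/-- An irreducible highest weight representation of the gap-2 Virasoro algebra of level
`(c, h, l)`, i.e. a copy of `L(c, h, l)`. -/
def IsHWRep {HW : Type} [AddCommGroup HW] [Module ℂ HW]
    (G : GapVirasoro 2) (c h l : ℂ) (ρ : G.g →ₗ⁅ℂ⁆ Module.End ℂ HW) : Prop :=
  IsIrreducibleRep ρ ∧
  ∃ w₀ : HW, w₀ ≠ 0 ∧ ρ (G.Lg 0) w₀ = h • w₀ ∧
    ρ (G.Cg 0) w₀ = c • w₀ ∧ ρ (G.Cg 1) w₀ = l • w₀ ∧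
    (∀ m : ℕ, 1 ≤ m → ρ (G.Lg (m : ℤ)) w₀ = 0 ∧ ρ (G.Ig (2 * (m : ℤ) - 1)) w₀ = 0)

/-- `ρ₂` is a subquotient of `ρ₁`: there is an invariant submodule `W` and an
equivariant surjection `W → M₂`. -/
def IsSubquotientRep {g : Type} [LieRing g] [LieAlgebra ℂ g]
    {M₁ M₂ : Type} [AddCommGroup M₁] [Module ℂ M₁] [AddCommGroup M₂] [Module ℂ M₂]
    (ρ₁ : g →ₗ⁅ℂ⁆ Module.End ℂ M₁) (ρ₂ : g →ₗ⁅ℂ⁆ Module.End ℂ M₂) : Prop :=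
  ∃ W : Submodule ℂ M₁, ∃ hW : ∀ x : g, ∀ w ∈ W, ρ₁ x w ∈ W,
    ∃ π : W →ₗ[ℂ] M₂, Function.Surjective π ∧
      ∀ (x : g) (w : M₁) (hw : w ∈ W), π ⟨ρ₁ x w, hW x w hw⟩ = ρ₂ x (π ⟨w, hw⟩)

/-! Expanding both factors with the action formula,
`Ω^{(i,j,s)}_{l,m} · v(k) = ∑_{a,b ≤ h} (a! b!)⁻¹ (Δ^s f_{a,b})(m) · (I_a I_b v)(pl+k+i+j)`
with `f_{a,b}(x) = (pl + i - px)^a (px + j)^b` and `Δ` the forward difference. `Δ^s` lowers the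
degree by `s` and multiplies the coefficient of `x^{2h}` by `(2h)!/(2h-s)!`; only `f_{h,h}` reaches
degree `2h`, with leading coefficient `(-1)^h p^{2h}`. -/

namespace Polynomial

variable {R : Type*} [CommRing R]

noncomputable def fwdDiff (f : R[X]) : R[X] := taylor 1 f - f

theorem coeff_fwdDiff {f : R[X]} {n : ℕ} (hf : f.natDegree ≤ n + 1) :
    (fwdDiff f).coeff n = (n + 1) * f.coeff (n + 1) := by
  have hdeg : (hasseDeriv n f).natDegree < 2 := by
    have := natDegree_hasseDeriv_le f n
    omega
  have heval : (hasseDeriv n f).eval 1 = f.coeff n + (n + 1) * f.coeff (n + 1) := by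
    rw [eval_eq_sum_range' hdeg, Finset.sum_range_succ, Finset.sum_range_one]
    simp [hasseDeriv_coeff, Nat.add_comm 1 n, Nat.choose_succ_self_right]
  rw [fwdDiff, coeff_sub, taylor_coeff, heval]
  ring

theorem natDegree_fwdDiff_iterate_le {f : R[X]} {D : ℕ} (hf : f.natDegree ≤ D) (s : ℕ) :
    (fwdDiff^[s] f).natDegree ≤ D - s := by
  induction s generalizing f D with
  | zero => simpa using hf
  | succ s ih =>
    have hdiff : (fwdDiff f).natDegree ≤ D - 1 := by
      rw [natDegree_le_iff_coeff_eq_zero]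
      intro n hn
      rw [coeff_fwdDiff (by omega), coeff_eq_zero_of_natDegree_lt (by omega), mul_zero]
    rw [Function.iterate_succ_apply]
    exact (ih hdiff).trans (by omega)

theorem coeff_fwdDiff_iterate {f : R[X]} {D s : ℕ} (hf : f.natDegree ≤ D) (hs : s ≤ D) :
    (fwdDiff^[s] f).coeff (D - s) = D.descFactorial s * f.coeff D := by
  induction s with
  | zero => simp
  | succ s ih =>
    have hprev : (fwdDiff^[s] f).natDegree ≤ D - s - 1 + 1 :=
      (natDegree_fwdDiff_iterate_le hf s).trans (by omega)
    rw [Function.iterate_succ_apply', show D - (s + 1) = D - s - 1 by omega,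
      coeff_fwdDiff hprev, show D - s - 1 + 1 = D - s by omega, ih (by omega),
      Nat.descFactorial_succ, Nat.sub_sub, Nat.cast_mul, Nat.cast_sub hs, Nat.cast_sub (by omega)]
    push_cast
    ring

theorem eval_fwdDiff_iterate (f : R[X]) (s : ℕ) (x : R) :
    (fwdDiff^[s] f).eval x =
      ∑ k ∈ Finset.range (s + 1), (-1) ^ (s - k) * s.choose k * f.eval (x + k) := by
  have hfun : (fun y => (fwdDiff^[s] f).eval y) = (_root_.fwdDiff 1)^[s] f.eval := by
    induction s with
    | zero => rfl
    | succ s ih =>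
      rw [Function.iterate_succ_apply', Function.iterate_succ_apply', ← ih]
      funext y
      simp [fwdDiff, _root_.fwdDiff, taylor_eval]
  rw [congrFun hfun x, fwdDiff_iter_eq_sum_shift]
  refine Finset.sum_congr rfl fun k _ => ?_
  simp [zsmul_eq_mul]

theorem natDegree_pow_mul_pow_le {f g : R[X]} (hf : f.natDegree ≤ 1) (hg : g.natDegree ≤ 1)
    (a b : ℕ) : (f ^ a * g ^ b).natDegree ≤ a + b := by
  simpa using natDegree_mul_le_of_le (natDegree_pow_le_of_le a hf) (natDegree_pow_le_of_le b hg)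

theorem coeff_pow_mul_pow_add {f g : R[X]} (hf : f.natDegree ≤ 1) (hg : g.natDegree ≤ 1)
    (a b : ℕ) : (f ^ a * g ^ b).coeff (a + b) = f.coeff 1 ^ a * g.coeff 1 ^ b := by
  have hfa := natDegree_pow_le_of_le a hf
  have hgb := natDegree_pow_le_of_le b hg
  rw [mul_one] at hfa hgb
  rw [coeff_mul_add_eq_of_natDegree_le hfa hgb, ← coeff_pow_of_natDegree_le hf,
    ← coeff_pow_of_natDegree_le hg, mul_one, mul_one]

theorem sum_eval_smul_eq_sum_pow_smul {ι M : Type*} [AddCommGroup M] [Module R M]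
    (S : Finset ι) (P : ι → R[X]) (w : ι → M) {D : ℕ} (hP : ∀ x ∈ S, (P x).natDegree ≤ D)
    (r : R) :
    ∑ x ∈ S, (P x).eval r • w x =
      ∑ t ∈ Finset.range (D + 1), r ^ t • ∑ x ∈ S, (P x).coeff t • w x := by
  simp_rw [Finset.smul_sum, smul_smul]
  rw [Finset.sum_comm]
  refine Finset.sum_congr rfl fun x hx => ?_
  rw [eval_eq_sum_range' (Nat.lt_succ_of_le (hP x hx)), Finset.sum_smul]
  simp_rw [mul_comm]

end Polynomial

theorem Int.toNat_mul_add_emod {p r : ℕ} (hr : r < p) (t : ℤ) :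
    (((p : ℤ) * t + r) % p).toNat = r := by
  rw [add_comm, Int.add_mul_emod_self_left, Int.emod_eq_of_lt (by positivity) (by omega),
    Int.toNat_natCast]

theorem exists_lt_eq_dmin {p : ℕ} (hp : 0 < p) (d : ℕ → ℕ) : ∃ e < p, d e = dmin p d := by
  have hne : (Finset.range p).Nonempty := Finset.nonempty_range_iff.2 hp.ne'
  obtain ⟨e, he, hde⟩ := Finset.exists_mem_eq_inf' hne d
  exact ⟨e, Finset.mem_range.1 he, by rw [dmin, finsetMin, dif_pos hne, hde]⟩

theorem TwistedHV.map_I_eq_zero {T : TwistedHV} {L : Type*} [LieRing L] [LieAlgebra ℂ L]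
    (ρ : T.T →ₗ⁅ℂ⁆ L) {b c : ℤ} (hb : b ≠ 0) (hc : c ≠ 0) (hρb : ρ (T.I b) = 0) :
    ρ (T.I c) = 0 := by
  have hbracket := congrArg ρ (T.bracket_LI (c - b) b)
  rw [sub_add_cancel, if_neg hc, add_zero, LieHom.map_lie, hρb, lie_zero, map_smul] at hbracket
  exact (smul_eq_zero.1 hbracket.symm).resolve_left (Int.cast_ne_zero.2 hb)

section omegaPoly

open Polynomial

noncomputable def omegaPoly (p : ℕ) (l : ℤ) (i j s a b : ℕ) : ℂ[X] :=
  Polynomial.fwdDiff^[s]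
    ((C ((p : ℂ) * l + i) - C (p : ℂ) * X) ^ a * (C (p : ℂ) * X + C (j : ℂ)) ^ b)

theorem eval_omegaPoly (p : ℕ) (l m : ℤ) (i j s a b : ℕ) :
    (omegaPoly p l i j s a b).eval (m : ℂ) = ∑ k ∈ Finset.range (s + 1),
      (-1) ^ (s - k) * s.choose k *
        ((((p * l - p * m - p * k + i : ℤ)) : ℂ) ^ a * (((p * m + p * k + j : ℤ)) : ℂ) ^ b) := by
  rw [omegaPoly, eval_fwdDiff_iterate]
  refine Finset.sum_congr rfl fun k _ => ?_
  simp only [eval_mul, eval_pow, eval_sub, eval_add, eval_C, eval_X]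
  push_cast
  ring

theorem natDegree_omegaPoly_le (p : ℕ) (l : ℤ) (i j s a b : ℕ) :
    (omegaPoly p l i j s a b).natDegree ≤ a + b - s :=
  natDegree_fwdDiff_iterate_le
    (natDegree_pow_mul_pow_le (by compute_degree!) (by compute_degree!) a b) s

theorem coeff_omegaPoly_two_mul_sub (p : ℕ) (l : ℤ) (i j : ℕ) {s a b h : ℕ} (ha : a ≤ h)
    (hb : b ≤ h) (hs : s ≤ 2 * h) :
    (omegaPoly p l i j s a b).coeff (2 * h - s) =
      if a = h ∧ b = h then (2 * h).descFactorial s * ((-(p : ℂ)) ^ h * (p : ℂ) ^ h) else 0 := by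
  have hlin₁ : (C ((p : ℂ) * l + i) - C (p : ℂ) * X).natDegree ≤ 1 := by compute_degree!
  have hlin₂ : (C (p : ℂ) * X + C (j : ℂ)).natDegree ≤ 1 := by compute_degree!
  rw [omegaPoly, coeff_fwdDiff_iterate
    ((natDegree_pow_mul_pow_le hlin₁ hlin₂ a b).trans (by omega)) hs]
  split_ifs with hab
  · obtain ⟨rfl, rfl⟩ := hab
    rw [two_mul, coeff_pow_mul_pow_add hlin₁ hlin₂]
    simp
  · rw [coeff_eq_zero_of_natDegree_lt ((natDegree_pow_mul_pow_le hlin₁ hlin₂ a b).trans_lt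
      (by omega)), mul_zero]

theorem sum_coeff_omegaPoly_smul {V : Type*} [AddCommGroup V] [Module ℂ V] (p : ℕ) (l : ℤ)
    (i j : ℕ) {s d₁ d₂ h : ℕ} (hd₁ : d₁ ≤ h) (hd₂ : d₂ ≤ h) (hs : s ≤ 2 * h)
    (w : ℕ × ℕ → V) :
    ∑ x ∈ Finset.Ico d₁ (h + 1) ×ˢ Finset.Ico d₂ (h + 1),
        (omegaPoly p l i j s x.1 x.2).coeff (2 * h - s) •
          ((x.1.factorial * x.2.factorial : ℂ)⁻¹ • w x) =
      (((-1 : ℂ) ^ h * (p : ℂ) ^ (2 * h) * ((2 * h).factorial : ℂ)) /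
        (((h.factorial : ℂ)) ^ 2 * (((2 * h - s).factorial : ℂ)))) • w (h, h) := by
  have hmem : (h, h) ∈ Finset.Ico d₁ (h + 1) ×ˢ Finset.Ico d₂ (h + 1) := by
    simp [Finset.mem_product, hd₁, hd₂]
  rw [Finset.sum_eq_single_of_mem (h, h) hmem fun x hx hne => ?_]
  · rw [coeff_omegaPoly_two_mul_sub p l i j le_rfl le_rfl hs, if_pos ⟨rfl, rfl⟩, smul_smul]
    congr 1
    have hfact : ((2 * h - s).factorial * (2 * h).descFactorial s : ℂ) = (2 * h).factorial := by
      exact_mod_cast Nat.factorial_mul_descFactorial hs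
    have hne : ((2 * h - s).factorial : ℂ) ≠ 0 := Nat.cast_ne_zero.2 (Nat.factorial_ne_zero _)
    rw [← hfact, neg_pow]
    field_simp
    ring
  · simp only [Finset.mem_product, Finset.mem_Ico] at hx
    rw [coeff_omegaPoly_two_mul_sub p l i j (by omega) (by omega) hs,
      if_neg fun hxh => hne (Prod.ext hxh.1 hxh.2), zero_smul]

end omegaPoly

namespace IsTHVAction

variable {T : TwistedHV} {p : ℕ} {d : ℕ → ℕ} {a : ℂ} {n : ℕ} {R : THVRep n}
  {ρ : T.T →ₗ⁅ℂ⁆ Module.End ℂ (ℤ →₀ R.V)} {h : ℕ}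

theorem I_single_eq_sum (hρ : IsTHVAction T p d a R ρ) (hann : ∀ c, h < c → ∀ w, R.IV c w = 0)
    (b k : ℤ) (w : R.V) :
    ρ (T.I b) (single k w) = ∑ c ∈ Finset.Ico (d (b % p).toNat) (h + 1),
      ((b : ℂ) ^ c / c.factorial) • single (b + k) (R.IV c w) := by
  rw [hρ.2.1, Finset.sum_Ico_eq_sum_range]
  refine (finsum_eq_sum_of_support_subset _ fun c hc => ?_).trans
    (Finset.sum_congr rfl fun c _ => by rw [add_comm])
  simp only [Function.mem_support] at hc
  by_contra hcr
  rw [Finset.coe_range, Set.mem_Iio, not_lt] at hcr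
  exact hc (by rw [hann _ (by omega), single_zero, smul_zero])

/-- If `d e > h`, then `h = 0` and every `I_b` with `b ≡ e` acts by zero; the bracket
`[L_{c-b}, I_b] = b I_c` spreads this to all `I_c` with `c ≠ 0`, but `I_{p+e₀}` with `d e₀ = 0`
moves `v₀(0)` to `(I_0 v₀)(p+e₀) ≠ 0`. -/
theorem le_of_annLevel {R : THVRep (dmin p d)} {ρ : T.T →ₗ⁅ℂ⁆ Module.End ℂ (ℤ →₀ R.V)}
    (hρ : IsTHVAction T p d a R ρ) (hp : 0 < p) (hd : ∀ e, d e ≤ 1) {q : ℕ}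
    (hlev : R.AnnLevel h q) {e : ℕ} (he : e < p) : d e ≤ h := by
  obtain ⟨hmin, ⟨v₀, hv₀⟩, -, hann, -⟩ := hlev
  by_contra! hlt
  obtain rfl : h = 0 := by have := hd e; omega
  obtain ⟨e₀, he₀, hde₀⟩ := exists_lt_eq_dmin hp d
  have hI : ρ (T.I (p * 1 + e)) = 0 := by
    refine Finsupp.lhom_ext fun k w => ?_
    rw [hρ.I_single_eq_sum hann, Int.toNat_mul_add_emod he, Finset.Ico_eq_empty (by omega),
      Finset.sum_empty, LinearMap.zero_apply]
  have hI₀ : ρ (T.I (p * 1 + e₀)) = 0 :=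
    T.map_I_eq_zero ρ (by omega) (by omega) hI
  have hact := LinearMap.congr_fun hI₀ (single 0 v₀)
  rw [hρ.I_single_eq_sum hann, Int.toNat_mul_add_emod he₀, show d e₀ = 0 by omega,
    Finset.sum_Ico_succ_top le_rfl, Finset.Ico_self, Finset.sum_empty, zero_add] at hact
  exact hv₀ (by simpa using hact)

theorem I_mul_I_single (hρ : IsTHVAction T p d a R ρ) (hann : ∀ c, h < c → ∀ w, R.IV c w = 0)
    (A B k : ℤ) (v : R.V) :
    (ρ (T.I A) * ρ (T.I B)) (single k v) =
      ∑ x ∈ Finset.Ico (d (A % p).toNat) (h + 1) ×ˢ Finset.Ico (d (B % p).toNat) (h + 1),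
        ((A : ℂ) ^ x.1 / x.1.factorial * ((B : ℂ) ^ x.2 / x.2.factorial)) •
          single (A + B + k) (R.IV x.1 (R.IV x.2 v)) := by
  rw [Module.End.mul_apply, hρ.I_single_eq_sum hann, map_sum, Finset.sum_product_right]
  refine Finset.sum_congr rfl fun c _ => ?_
  rw [map_smul, hρ.I_single_eq_sum hann, Finset.smul_sum]
  refine Finset.sum_congr rfl fun c' _ => ?_
  rw [smul_smul, mul_comm, add_assoc]

theorem omegaOp_single_eq (hρ : IsTHVAction T p d a R ρ) (hann : ∀ c, h < c → ∀ w, R.IV c w = 0)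
    {i j : ℕ} (hi : i < p) (hj : j < p) (l m k : ℤ) (s : ℕ) (v : R.V) :
    OmegaOp ρ T.I p i j l m s (single k v) = single (p * l + k + i + j)
      (∑ x ∈ Finset.Ico (d i) (h + 1) ×ˢ Finset.Ico (d j) (h + 1),
        (omegaPoly p l i j s x.1 x.2).eval (m : ℂ) •
          ((x.1.factorial * x.2.factorial : ℂ)⁻¹ • R.IV x.1 (R.IV x.2 v))) := by
  have hA (k₀ : ℕ) : ((p * l - p * m - p * k₀ + i : ℤ) % p).toNat = i := by
    rw [show (p * l - p * m - p * k₀ + i : ℤ) = p * (l - m - k₀) + i by ring]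
    exact Int.toNat_mul_add_emod hi _
  have hB (k₀ : ℕ) : ((p * m + p * k₀ + j : ℤ) % p).toNat = j := by
    rw [show (p * m + p * k₀ + j : ℤ) = p * (m + k₀) + j by ring]
    exact Int.toNat_mul_add_emod hj _
  have hidx (k₀ : ℕ) : (p * l - p * m - p * k₀ + i : ℤ) + (p * m + p * k₀ + j) + k =
      p * l + k + i + j := by ring
  simp only [OmegaOp, LinearMap.sum_apply, LinearMap.smul_apply, hρ.I_mul_I_single hann, hA, hB,
    hidx, Finset.smul_sum, smul_smul, single_finsetSum, smul_single, eval_omegaPoly]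
  rw [Finset.sum_comm]
  refine Finset.sum_congr rfl fun x _ => ?_
  rw [← single_finsetSum, ← Finset.sum_smul, Finset.sum_mul]
  congr 2
  refine Finset.sum_congr rfl fun k₀ _ => ?_
  field_simp

end IsTHVAction

theorem omega_polynomial_in_m_general (p : ℕ) (hp : 1 < p) (T : TwistedHV) (a : ℂ)
    (d : ℕ → ℕ) (hd : ∀ i, d i ≤ 1)
    (R : THVRep (dmin p d)) (h q : ℕ) (hlev : R.AnnLevel h q)
    (ρ : T.T →ₗ⁅ℂ⁆ Module.End ℂ (ℤ →₀ R.V)) (hρ : IsTHVAction T p d a R ρ)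
    (v : R.V) (l k : ℤ) (i j : ℕ)
    (hi2 : i ≤ p - 1) (hj2 : j ≤ p - 1)
    (s : ℕ) (hs : s ≤ 2 * h) :
    ∃ u : ℕ → (ℤ →₀ R.V),
      (∀ t : ℕ, u t ∈ LinearMap.range
        (Finsupp.lsingle ((p : ℤ) * l + k + (i : ℤ) + (j : ℤ)) : R.V →ₗ[ℂ] ℤ →₀ R.V)) ∧
      (∀ m : ℤ, OmegaOp ρ T.I p i j l m s (Finsupp.single k v) =
        ∑ t ∈ Finset.range (2 * h - s + 1), (m : ℂ) ^ t • u t) ∧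
      u (2 * h - s) =
        (((-1 : ℂ) ^ h * (p : ℂ) ^ (2 * h) * ((2 * h).factorial : ℂ)) /
            (((h.factorial : ℂ)) ^ 2 * (((2 * h - s).factorial : ℂ)))) •
          Finsupp.single ((p : ℤ) * l + k + (i : ℤ) + (j : ℤ)) (R.IV h (R.IV h v)) := by
  have hi : i < p := by omega
  have hj : j < p := by omega
  have hann : ∀ c, h < c → ∀ w, R.IV c w = 0 := hlev.2.2.2.1
  set S := Finset.Ico (d i) (h + 1) ×ˢ Finset.Ico (d j) (h + 1)
  refine ⟨fun t => single ((p : ℤ) * l + k + i + j)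
      (∑ x ∈ S, (omegaPoly p l i j s x.1 x.2).coeff t •
        ((x.1.factorial * x.2.factorial : ℂ)⁻¹ • R.IV x.1 (R.IV x.2 v))),
    fun t => ⟨_, rfl⟩, fun m => ?_, ?_⟩
  · have hdeg (x) (hx : x ∈ S) : (omegaPoly p l i j s x.1 x.2).natDegree ≤ 2 * h - s := by
      simp only [S, Finset.mem_product, Finset.mem_Ico] at hx
      exact (natDegree_omegaPoly_le p l i j s x.1 x.2).trans (by omega)
    rw [hρ.omegaOp_single_eq hann hi hj,
      Polynomial.sum_eval_smul_eq_sum_pow_smul S _ _ hdeg, single_finsetSum]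
    simp_rw [smul_single]
  · have hdi := hρ.le_of_annLevel (by omega) hd hlev hi
    have hdj := hρ.le_of_annLevel (by omega) hd hlev hj
    dsimp only
    rw [sum_coeff_omegaPoly_smul p l i j hdi hdj hs, smul_single]

/-- for `s ≤ 2h`, the function `m ↦ Ω^{(i,j,s)}_{l,m} · v(k)` on the `𝔗`-module
`M(V, a, d)` is polynomial in `m` of degree at most `2h - s`, with coefficients in
`V ⊗ x^{pl + k + i + j}` and with the prescribed leading coefficient. -/
theorem omega_polynomial_in_m (p : ℕ) (hp : 1 < p) (T : TwistedHV) (a : ℂ)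
    (d : ℕ → ℕ) (hd : ∀ i, d i ≤ 1)
    (R : THVRep (dmin p d)) (hres : R.Restricted) (h q : ℕ) (hlev : R.AnnLevel h q)
    (ρ : T.T →ₗ⁅ℂ⁆ Module.End ℂ (ℤ →₀ R.V)) (hρ : IsTHVAction T p d a R ρ)
    (v : R.V) (l k : ℤ) (i j : ℕ)
    (hi1 : 1 ≤ i) (hi2 : i ≤ p - 1) (hj1 : 1 ≤ j) (hj2 : j ≤ p - 1)
    (s : ℕ) (hs : s ≤ 2 * h) :
    ∃ u : ℕ → (ℤ →₀ R.V),
      (∀ t : ℕ, u t ∈ LinearMap.range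
        (Finsupp.lsingle ((p : ℤ) * l + k + (i : ℤ) + (j : ℤ)) : R.V →ₗ[ℂ] ℤ →₀ R.V)) ∧
      (∀ m : ℤ, OmegaOp ρ T.I p i j l m s (Finsupp.single k v) =
        ∑ t ∈ Finset.range (2 * h - s + 1), (m : ℂ) ^ t • u t) ∧
      u (2 * h - s) =
        (((-1 : ℂ) ^ h * (p : ℂ) ^ (2 * h) * ((2 * h).factorial : ℂ)) /
            (((h.factorial : ℂ)) ^ 2 * (((2 * h - s).factorial : ℂ)))) •
          Finsupp.single ((p : ℤ) * l + k + (i : ℤ) + (j : ℤ)) (R.IV h (R.IV h v)) :=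
  omega_polynomial_in_m_general p hp T a d hd R h q hlev ρ hρ v l k i j hi2 hj2 s hs
end

section
/- Let a, b, c ∈ ℂ, let P ⊆ {0,1,…,p−1} and let (d_1,…,d_{p−1}) ∈ {0,1}^{p−1} satisfy min{d_1,…,d_{p−1}} = 0 and the closure condition: (i+j) mod p ∈ P whenever j ∈ P and d_i = 0 (1 ≤ i ≤ p−1). Define F_{i,j} = c if d_i = 0 and j ∈ P, and F_{i,j} = 0 otherwise (1 ≤ i ≤ p−1, 0 ≤ j ≤ p−1). Then the complex vector space with basis {v_k : k ∈ 𝒫} carries a module structure over the gap-p Virasoro algebra 𝔤 determined by L_{pm} · v_k = (a + k + bpm) v_{pm+k}, I_{pm+i} · v_k = F_{i, k̄} v_{pm+i+k} for 1 ≤ i ≤ p−1, and all C_j acting as 0 (the module of intermediate series V(a,b,F)). -/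
open Finsupp TensorProduct

attribute [local instance 100] LieRing.ofAssociativeRing

/-! All operators are weighted translations `v_k ↦ w(k) v_{τ k}` of the basis `{v_k : k ∈ 𝒫}`. For
commuting translations `τ, σ` the commutator of two such operators is the translation `τ ∘ σ` with
weight `w(σ k) v(k) - v(τ k) w(k)`, so each relation of `𝔤` (with the `C_j` acting as `0`) becomes
an identity of weights: `p(n-m)(a+k+bp(m+n))` for `[L, L]`, `n c` for `[L, I]` and `c² - c² = 0` for
`[I, I]`. A linear map prescribed on the basis of `𝔤` that respects the brackets of basis elements
is a Lie homomorphism. Letting `I_n` act by `c` times translation when `d n̄ = 0` and `n + 𝒫 ⊆ 𝒫`,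
and by `0` otherwise, the relations hold for every `P`; the closure condition is what makes this
action agree with `F`. -/

theorem LinearMap.map_lie_swap_of_map_lie {R L A : Type*} [CommRing R] [LieRing L] [Module R L]
    [Ring A] [Module R A] (f : L →ₗ[R] A) {x y : L} (h : f ⁅x, y⁆ = f x * f y - f y * f x) :
    f ⁅y, x⁆ = f y * f x - f x * f y := by
  rw [← lie_skew, map_neg, h, neg_sub]

theorem LinearMap.map_lie_of_basis {R L A ι : Type*} [CommRing R] [LieRing L] [LieAlgebra R L]
    [Ring A] [Algebra R A] (b : Module.Basis ι R L) (f : L →ₗ[R] A)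
    (h : ∀ i j, f ⁅b i, b j⁆ = f (b i) * f (b j) - f (b j) * f (b i)) (x y : L) :
    f ⁅x, y⁆ = f x * f y - f y * f x := by
  let B : L →ₗ[R] L →ₗ[R] A := LinearMap.mk₂ R (fun x y => f ⁅x, y⁆)
    (by simp [add_lie]) (by simp [smul_lie]) (by simp [lie_add]) (by simp [lie_smul])
  let C : L →ₗ[R] L →ₗ[R] A := LinearMap.mk₂ R (fun x y => f x * f y - f y * f x)
    (by intros; simp only [map_add]; noncomm_ring)
    (by intros; simp only [map_smul, smul_mul_assoc, mul_smul_comm, smul_sub])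
    (by intros; simp only [map_add]; noncomm_ring)
    (by intros; simp only [map_smul, smul_mul_assoc, mul_smul_comm, smul_sub])
  exact LinearMap.congr_fun₂ (LinearMap.ext_basis b b h : B = C) x y

namespace Finsupp

variable {R ι : Type*} [CommRing R]

noncomputable def weightedShift (τ : ι → ι) (w : ι → R) : Module.End R (ι →₀ R) :=
  Finsupp.lift (ι →₀ R) R ι fun k => single (τ k) (w k)

variable {τ σ : ι → ι} {w v : ι → R}

@[simp] theorem weightedShift_single (k : ι) (x : R) :
    weightedShift τ w (single k x) = single (τ k) (w k * x) := by
  simp [weightedShift, smul_single, mul_comm]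

theorem weightedShift_mul :
    weightedShift τ w * weightedShift σ v = weightedShift (τ ∘ σ) fun k => w (σ k) * v k := by
  ext k : 2
  simp

theorem smul_weightedShift (r : R) : r • weightedShift τ w = weightedShift τ (r • w) := by
  ext k : 2
  simp

theorem weightedShift_mul_sub_swap (hτσ : τ ∘ σ = σ ∘ τ) :
    weightedShift τ w * weightedShift σ v - weightedShift σ v * weightedShift τ w =
      weightedShift (τ ∘ σ) fun k => w (σ k) * v k - v (τ k) * w k := by
  rw [weightedShift_mul, weightedShift_mul, ← hτσ]
  ext k : 2
  simp

end Finsupp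

namespace GapVirasoro

structure Relations (p : ℕ) {A : Type*} [Ring A] [Algebra ℂ A] (Lop Iop : ℤ → A) : Prop where
  comm_LL : ∀ m n, Lop m * Lop n - Lop n * Lop m = ((p : ℂ) * (n - m)) • Lop (m + n)
  comm_LI : ∀ m n, ¬ (p : ℤ) ∣ n → Lop m * Iop n - Iop n * Lop m = (n : ℂ) • Iop (p * m + n)
  comm_II : ∀ m n, ¬ (p : ℤ) ∣ m → ¬ (p : ℤ) ∣ n → Commute (Iop m) (Iop n)

variable {p : ℕ} (G : GapVirasoro p) {A : Type*} [Ring A] [Algebra ℂ A] (Lop Iop : ℤ → A)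

noncomputable def liftLinear : G.g →ₗ[ℂ] A :=
  G.basis.constr ℂ (Sum.elim Lop (Sum.elim (fun n => Iop n.1) 0))

theorem liftLinear_basis (x) :
    G.liftLinear Lop Iop (G.basis x) = Sum.elim Lop (Sum.elim (fun n => Iop n.1) 0) x :=
  G.basis.constr_basis ℂ _ x

theorem liftLinear_Lg (m : ℤ) : G.liftLinear Lop Iop (G.Lg m) = Lop m := by
  simpa only [G.basis_eq, Sum.elim_inl, Sum.elim_inr, Pi.zero_apply] using
    G.liftLinear_basis Lop Iop (Sum.inl m)

theorem liftLinear_Ig {n : ℤ} (hn : ¬ (p : ℤ) ∣ n) : G.liftLinear Lop Iop (G.Ig n) = Iop n := by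
  simpa only [G.basis_eq, Sum.elim_inl, Sum.elim_inr, Pi.zero_apply] using
    G.liftLinear_basis Lop Iop (Sum.inr (Sum.inl ⟨n, hn⟩))

theorem liftLinear_Cg {j : ℕ} (hj : j ≤ p / 2) : G.liftLinear Lop Iop (G.Cg j) = 0 := by
  simpa only [G.basis_eq, Sum.elim_inl, Sum.elim_inr, Pi.zero_apply] using
    G.liftLinear_basis Lop Iop (Sum.inr (Sum.inr ⟨j, hj⟩))

variable {Lop Iop}

theorem liftLinear_map_lie_basis (h : Relations p Lop Iop) (i j) :
    G.liftLinear Lop Iop ⁅G.basis i, G.basis j⁆ =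
      G.liftLinear Lop Iop (G.basis i) * G.liftLinear Lop Iop (G.basis j) -
        G.liftLinear Lop Iop (G.basis j) * G.liftLinear Lop Iop (G.basis i) := by
  set ρ := G.liftLinear Lop Iop
  have map_lie_Cg {j : ℕ} (hj : j ≤ p / 2) (x : G.g) :
      ρ ⁅G.Cg j, x⁆ = ρ (G.Cg j) * ρ x - ρ x * ρ (G.Cg j) := by
    rw [G.central_C j hj, liftLinear_Cg G Lop Iop hj, map_zero, mul_zero, zero_mul, sub_zero]
  have map_comm_LI (m : ℤ) {n : ℤ} (hn : ¬ (p : ℤ) ∣ n) :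
      ρ ⁅G.Lg m, G.Ig n⁆ = ρ (G.Lg m) * ρ (G.Ig n) - ρ (G.Ig n) * ρ (G.Lg m) := by
    have hn' : ¬ (p : ℤ) ∣ p * m + n := by rwa [dvd_add_right (dvd_mul_right _ _)]
    rw [G.bracket_LI m n hn, map_smul, liftLinear_Ig G Lop Iop hn, liftLinear_Ig G Lop Iop hn',
      liftLinear_Lg, h.comm_LI m n hn]
  rcases i with m | ⟨n, hn⟩ | ⟨j, hj⟩ <;> rcases j with m' | ⟨n', hn'⟩ | ⟨j', hj'⟩ <;>
    simp only [G.basis_eq, Sum.elim_inl, Sum.elim_inr]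
  · rw [G.bracket_LL, map_add, map_smul, liftLinear_Lg, liftLinear_Lg, liftLinear_Lg, h.comm_LL]
    split_ifs
    · rw [map_smul, liftLinear_Cg G Lop Iop (Nat.zero_le _), smul_zero, add_zero]
    · rw [map_zero, add_zero]
  · exact map_comm_LI m hn'
  · exact ρ.map_lie_swap_of_map_lie (map_lie_Cg hj' _)
  · exact ρ.map_lie_swap_of_map_lie (map_comm_LI m' hn)
  · rw [G.bracket_II n n' hn hn', liftLinear_Ig G Lop Iop hn, liftLinear_Ig G Lop Iop hn',
      (h.comm_II n n' hn hn').eq, sub_self]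
    split_ifs
    · rw [map_smul, liftLinear_Cg G Lop Iop (by omega), smul_zero]
    · rw [map_zero]
  · exact ρ.map_lie_swap_of_map_lie (map_lie_Cg hj' _)
  all_goals exact map_lie_Cg hj _

noncomputable def lift (h : Relations p Lop Iop) : G.g →ₗ⁅ℂ⁆ A :=
  { G.liftLinear Lop Iop with
    map_lie' := (G.liftLinear Lop Iop).map_lie_of_basis G.basis
      (G.liftLinear_map_lie_basis h) _ _ }

theorem lift_apply (h : Relations p Lop Iop) (x : G.g) : G.lift h x = G.liftLinear Lop Iop x :=
  rfl

end GapVirasoro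

namespace PIdx

variable {p : ℕ} {P : Finset ℕ}

theorem ext {k l : PIdx p P} (h : k.1 = l.1) : k = l := Subtype.ext h

def AddStable (p : ℕ) (P : Finset ℕ) (n : ℤ) : Prop :=
  ∀ k : PIdx p P, ((n + k.1) % (p : ℤ)).toNat ∈ P

def addLeft (n : ℤ) (h : AddStable p P n) (k : PIdx p P) : PIdx p P := ⟨n + k.1, h k⟩

@[simp] theorem addLeft_coe (n : ℤ) (h : AddStable p P n) (k : PIdx p P) :
    (addLeft n h k).1 = n + k.1 := rfl

theorem addStable_mul_add_iff (m n : ℤ) :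
    AddStable p P (p * m + n) ↔ AddStable p P n := by
  have h (k : PIdx p P) : (p * m + n + k.1) % (p : ℤ) = (n + k.1) % p := by
    rw [add_assoc, Int.mul_add_emod_self_left]
  simp only [AddStable, h]

end PIdx

@[simp] theorem shiftIdx0_coe {p : ℕ} {P : Finset ℕ} (k : PIdx p P) (m : ℤ) :
    (shiftIdx0 k m).1 = p * m + k.1 := rfl

open PIdx

section GapOperators

variable (p : ℕ) (P : Finset ℕ)

noncomputable def gapL (a b : ℂ) (m : ℤ) : Module.End ℂ (PIdx p P →₀ ℂ) :=
  weightedShift (shiftIdx0 · m) fun k => a + k.1 + b * p * m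

open Classical in
noncomputable def gapI (c : ℂ) (d : ℕ → ℕ) (n : ℤ) : Module.End ℂ (PIdx p P →₀ ℂ) :=
  if h : d (n % (p : ℤ)).toNat = 0 ∧ AddStable p P n then
    weightedShift (addLeft n h.2) fun _ => c
  else 0

variable {p P}

theorem gapL_mul_gapL_sub_swap (a b : ℂ) (m n : ℤ) :
    gapL p P a b m * gapL p P a b n - gapL p P a b n * gapL p P a b m =
      ((p : ℂ) * (n - m)) • gapL p P a b (m + n) := by
  have hcomm : (shiftIdx0 · m) ∘ (shiftIdx0 · n) =
      (shiftIdx0 · n) ∘ (shiftIdx0 · m : PIdx p P → _) := by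
    funext k; apply PIdx.ext; simp only [Function.comp_apply, shiftIdx0_coe]; ring
  rw [gapL, gapL, gapL, weightedShift_mul_sub_swap hcomm, smul_weightedShift]
  congr 1
  · funext k; apply PIdx.ext; simp only [Function.comp_apply, shiftIdx0_coe]; ring
  · funext k; simp only [shiftIdx0_coe, Pi.smul_apply, smul_eq_mul]; push_cast; ring

theorem gapL_mul_gapI_sub_swap (a b c : ℂ) (d : ℕ → ℕ) (m n : ℤ) :
    gapL p P a b m * gapI p P c d n - gapI p P c d n * gapL p P a b m =
      (n : ℂ) • gapI p P c d (p * m + n) := by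
  have hmod : (p * m + n) % (p : ℤ) = n % p := Int.mul_add_emod_self_left _ _ _
  by_cases h : d (n % (p : ℤ)).toNat = 0 ∧ AddStable p P n
  · have h' : d ((p * m + n) % (p : ℤ)).toNat = 0 ∧ AddStable p P (p * m + n) := by
      rwa [hmod, addStable_mul_add_iff]
    have hcomm : (shiftIdx0 · m) ∘ addLeft n h.2 = addLeft n h.2 ∘ (shiftIdx0 · m) := by
      funext k; apply PIdx.ext; simp only [Function.comp_apply, shiftIdx0_coe, addLeft_coe]; ring
    rw [gapL, gapI, gapI, dif_pos h, dif_pos h', weightedShift_mul_sub_swap hcomm,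
      smul_weightedShift]
    congr 1
    · funext k; apply PIdx.ext; simp only [Function.comp_apply, shiftIdx0_coe, addLeft_coe]; ring
    · funext k; simp only [addLeft_coe, Pi.smul_apply, smul_eq_mul]; push_cast; ring
  · have h' : ¬ (d ((p * m + n) % (p : ℤ)).toNat = 0 ∧ AddStable p P (p * m + n)) := by
      rwa [hmod, addStable_mul_add_iff]
    rw [gapI, gapI, dif_neg h, dif_neg h', mul_zero, zero_mul, smul_zero]
    exact sub_self (0 : Module.End ℂ (PIdx p P →₀ ℂ))

theorem commute_gapI (c : ℂ) (d : ℕ → ℕ) (m n : ℤ) :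
    Commute (gapI p P c d m) (gapI p P c d n) := by
  unfold gapI
  split_ifs with hm hn
  · have hcomm : addLeft m hm.2 ∘ addLeft n hn.2 = addLeft n hn.2 ∘ addLeft m hm.2 := by
      funext k; apply PIdx.ext; simp only [Function.comp_apply, addLeft_coe]; ring
    rw [Commute, SemiconjBy, weightedShift_mul, weightedShift_mul, hcomm]
  all_goals simp

theorem relations_gapL_gapI (a b c : ℂ) (d : ℕ → ℕ) :
    GapVirasoro.Relations p (gapL p P a b) (gapI p P c d) :=
  ⟨gapL_mul_gapL_sub_swap a b, fun m n _ => gapL_mul_gapI_sub_swap a b c d m n,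
    fun m n _ _ => commute_gapI c d m n⟩

end GapOperators

section Evaluation

variable {p : ℕ} {P : Finset ℕ} {d : ℕ → ℕ}

theorem gapL_single (a b : ℂ) (m : ℤ) (k : PIdx p P) :
    gapL p P a b m (single k 1) = (a + k.1 + b * p * m) • single (shiftIdx0 k m) (1 : ℂ) := by
  rw [gapL, weightedShift_single, mul_one, smul_single_one]

theorem addStable_of_closed
    (hclo : ∀ i : ℕ, 1 ≤ i → i ≤ p - 1 → d i = 0 →
      ∀ j ∈ P, ((((i : ℤ) + (j : ℤ)) % (p : ℤ)).toNat) ∈ P)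
    {i : ℕ} (hi1 : 1 ≤ i) (hi2 : i ≤ p - 1) (hdi : d i = 0) : AddStable p P i := by
  intro k
  have hk : ((k.1 % p).toNat : ℤ) = k.1 % p :=
    Int.toNat_of_nonneg (Int.emod_nonneg _ (by omega))
  simpa only [hk, Int.add_emod_emod] using hclo i hi1 hi2 hdi _ k.2

theorem gapI_single (c : ℂ) (m : ℤ) {i : ℕ} (hi1 : 1 ≤ i) (hi2 : i ≤ p - 1)
    (hst : d i = 0 → AddStable p P i) (k : PIdx p P) :
    gapI p P c d (p * m + i) (single k 1) =
      if h : ((((i : ℤ) + k.1) % (p : ℤ)).toNat) ∈ P then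
        (if d i = 0 then c else 0) •
          single (⟨(p : ℤ) * m + (i : ℤ) + k.1, mem_shift h m⟩ : PIdx p P) (1 : ℂ)
      else 0 := by
  have hmod : ((p * m + i) % (p : ℤ)).toNat = i := by
    rw [Int.mul_add_emod_self_left, Int.emod_eq_of_lt (by omega) (by omega), Int.toNat_natCast]
  by_cases hdi : d i = 0
  · rw [gapI, dif_pos ⟨by rwa [hmod], (addStable_mul_add_iff m i).2 (hst hdi)⟩,
      dif_pos (hst hdi k), if_pos hdi, weightedShift_single, mul_one, smul_single_one]
    rfl
  · rw [gapI, dif_neg (by rw [hmod]; tauto), if_neg hdi]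
    simp only [LinearMap.zero_apply, zero_smul, dite_eq_ite, ite_self]
    rfl

end Evaluation

theorem intermediate_series_gap_general (p : ℕ) (G : GapVirasoro p) (a b c : ℂ) (P : Finset ℕ)
    (d : ℕ → ℕ)
    (hclo : ∀ i : ℕ, 1 ≤ i → i ≤ p - 1 → d i = 0 →
      ∀ j ∈ P, ((((i : ℤ) + (j : ℤ)) % (p : ℤ)).toNat) ∈ P) :
    ∃ ρ : G.g →ₗ⁅ℂ⁆ Module.End ℂ (PIdx p P →₀ ℂ),
      (∀ (m : ℤ) (k : PIdx p P),
        ρ (G.Lg m) (Finsupp.single k (1 : ℂ)) =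
          (a + (k.1 : ℂ) + b * (p : ℂ) * (m : ℂ)) • Finsupp.single (shiftIdx0 k m) (1 : ℂ)) ∧
      (∀ (m : ℤ) (i : ℕ), 1 ≤ i → i ≤ p - 1 → ∀ k : PIdx p P,
        ρ (G.Ig ((p : ℤ) * m + (i : ℤ))) (Finsupp.single k (1 : ℂ)) =
          if h : ((((i : ℤ) + k.1) % (p : ℤ)).toNat) ∈ P then
            (if d i = 0 then c else 0) •
              Finsupp.single (⟨(p : ℤ) * m + (i : ℤ) + k.1, mem_shift h m⟩ : PIdx p P) (1 : ℂ)
          else 0) ∧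
      (∀ j : ℕ, j ≤ p / 2 → ρ (G.Cg j) = 0) := by
  refine ⟨G.lift (relations_gapL_gapI a b c d), fun m k => ?_, fun m i hi1 hi2 k => ?_,
    fun j hj => G.liftLinear_Cg _ _ hj⟩
  · rw [G.lift_apply, G.liftLinear_Lg, gapL_single]
  · have hi : ¬ (p : ℤ) ∣ p * m + i := by
      rw [dvd_add_right (dvd_mul_right _ _)]
      exact_mod_cast Nat.not_dvd_of_pos_of_lt hi1 (by omega)
    rw [G.lift_apply, G.liftLinear_Ig _ _ hi,
      gapI_single c m hi1 hi2 (addStable_of_closed hclo hi1 hi2)]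

/-- the module of intermediate series `V(a, b, F)` over the gap-`p`
Virasoro algebra, on the space with basis `{v k : k ∈ 𝒫}`, where
`F i j = c` if `d i = 0` and `j ∈ P`, and `F i j = 0` otherwise. -/
theorem intermediate_series_gap (p : ℕ) (hp : 1 < p) (G : GapVirasoro p) (a b c : ℂ)
    (P : Finset ℕ) (hPsub : P ⊆ Finset.range p)
    (d : ℕ → ℕ) (hd : ∀ i, 1 ≤ i → i ≤ p - 1 → d i ≤ 1)
    (hmin : ∃ i, 1 ≤ i ∧ i ≤ p - 1 ∧ d i = 0)
    (hclo : ∀ i : ℕ, 1 ≤ i → i ≤ p - 1 → d i = 0 →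
      ∀ j ∈ P, ((((i : ℤ) + (j : ℤ)) % (p : ℤ)).toNat) ∈ P) :
    ∃ ρ : G.g →ₗ⁅ℂ⁆ Module.End ℂ (PIdx p P →₀ ℂ),
      (∀ (m : ℤ) (k : PIdx p P),
        ρ (G.Lg m) (Finsupp.single k (1 : ℂ)) =
          (a + (k.1 : ℂ) + b * (p : ℂ) * (m : ℂ)) • Finsupp.single (shiftIdx0 k m) (1 : ℂ)) ∧
      (∀ (m : ℤ) (i : ℕ), 1 ≤ i → i ≤ p - 1 → ∀ k : PIdx p P,
        ρ (G.Ig ((p : ℤ) * m + (i : ℤ))) (Finsupp.single k (1 : ℂ)) =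
          if h : ((((i : ℤ) + k.1) % (p : ℤ)).toNat) ∈ P then
            (if d i = 0 then c else 0) •
              Finsupp.single (⟨(p : ℤ) * m + (i : ℤ) + k.1, mem_shift h m⟩ : PIdx p P) (1 : ℂ)
          else 0) ∧
      (∀ j : ℕ, j ≤ p / 2 → ρ (G.Cg j) = 0) :=
  intermediate_series_gap_general p G a b c P d hclo
end
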